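/- arXiv:alg-geom/9406004 — 3 statements merged into one kernel-verified Lean document; each statement's English description precedes it below -/
import Mathlib

section
/- Let P be a finitely generated integral saturated commutative monoid. Choose a decomposition P^gp = G_fr ⊕ G_tor of its Grothendieck group into a free part and the torsion part, and set P_fr = P ∩ G_fr and P_tor the torsion subgroup of P. Then P = P_fr ⊕ P_tor, i.e., every x ∈ P factors uniquely as x = y·z with y ∈ P_fr and z ∈ P_tor. -/
/-! If `x = y * z` with `z ^ n = 1`, then `y ^ n = x ^ n ∈ P` and `z ^ n = 1 ∈ P`, so saturation puts
both factors in `P`. Uniqueness holds because `G_fr` meets the torsion subgroup trivially. -/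

def Submonoid.IsSaturated {M : Type*} [Monoid M] (P : Submonoid M) : Prop :=
  ∀ x : M, (∃ n : ℕ, 0 < n ∧ x ^ n ∈ P) → x ∈ P

theorem Submonoid.IsSaturated.mem_of_pow_eq_one {M : Type*} [Monoid M] {P : Submonoid M}
    (hP : P.IsSaturated) {z : M} {n : ℕ} (hn : 0 < n) (hz : z ^ n = 1) : z ∈ P :=
  hP z ⟨n, hn, hz ▸ P.one_mem⟩

theorem Submonoid.IsSaturated.left_mem_of_mul_mem {M : Type*} [CommMonoid M] {P : Submonoid M}
    (hP : P.IsSaturated) {y z : M} {n : ℕ} (hn : 0 < n) (hz : z ^ n = 1) (hyz : y * z ∈ P) :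
    y ∈ P :=
  hP y ⟨n, hn, by simpa only [mul_pow, hz, mul_one] using pow_mem hyz n⟩

theorem Subgroup.disjoint_of_torsionFree_of_torsion {G : Type*} [Group G] {F T : Subgroup G}
    (hF : ∀ x ∈ F, (∃ n : ℕ, 0 < n ∧ x ^ n = 1) → x = 1)
    (hT : ∀ x ∈ T, ∃ n : ℕ, 0 < n ∧ x ^ n = 1) : Disjoint F T :=
  Subgroup.disjoint_def.2 fun hxF hxT => hF _ hxF (hT _ hxT)

theorem Subgroup.eq_and_eq_of_mul_eq_mul_of_disjoint {G : Type*} [Group G] {H K : Subgroup G}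
    (hHK : Disjoint H K) {y y' z z' : G} (hy : y ∈ H) (hy' : y' ∈ H) (hz : z ∈ K)
    (hz' : z' ∈ K) (h : y * z = y' * z') : y = y' ∧ z = z' := by
  have := Subgroup.mul_injective_of_disjoint hHK
    (a₁ := (⟨y, hy⟩, ⟨z, hz⟩)) (a₂ := (⟨y', hy'⟩, ⟨z', hz'⟩)) h
  simpa only [Prod.mk.injEq, Subtype.mk.injEq] using this

theorem saturated_monoid_splits_free_and_torsion_general
    {G : Type*} [CommGroup G] (P : Submonoid G)
    (hsat : ∀ x : G, (∃ n : ℕ, 0 < n ∧ x ^ n ∈ P) → x ∈ P)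
    (Gfr Gtor : Subgroup G)
    (hGtor : ∀ x : G, x ∈ Gtor ↔ ∃ n : ℕ, 0 < n ∧ x ^ n = 1)
    (hGfr : ∀ x ∈ Gfr, (∃ n : ℕ, 0 < n ∧ x ^ n = 1) → x = 1)
    (hdec : ∀ g : G, ∃ y ∈ Gfr, ∃ z ∈ Gtor, g = y * z)
    :
    ∀ x ∈ P, ∃ y z : G,
      (y ∈ Gfr ∧ y ∈ P) ∧ (z ∈ Gtor ∧ z ∈ P) ∧ x = y * z ∧
      (∀ y' z' : G, y' ∈ Gfr → y' ∈ P → z' ∈ Gtor → z' ∈ P → x = y' * z' →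
        y' = y ∧ z' = z) := by
  have hP : P.IsSaturated := hsat
  have hdisj : Disjoint Gfr Gtor :=
    Subgroup.disjoint_of_torsionFree_of_torsion hGfr fun x hx => (hGtor x).1 hx
  intro x hx
  obtain ⟨y, hy, z, hz, rfl⟩ := hdec x
  obtain ⟨n, hn, hzn⟩ := (hGtor z).1 hz
  refine ⟨y, z, ⟨hy, hP.left_mem_of_mul_mem hn hzn hx⟩, ⟨hz, hP.mem_of_pow_eq_one hn hzn⟩,
    rfl, ?_⟩
  intro y' z' hy' _ hz' _ hyz
  exact Subgroup.eq_and_eq_of_mul_eq_mul_of_disjoint hdisj hy' hy hz' hz hyz.symm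

/-- Let `P` be a finitely generated integral saturated commutative monoid, modelled
as a finitely generated submonoid of the commutative group `G = P^gp` which it
generates, saturated in `G`.  Given a decomposition `G = G_fr ⊕ G_tor` of the
Grothendieck group into a torsion-free part `G_fr` and the torsion part `G_tor`,
set `P_fr = P ∩ G_fr` and `P_tor` the torsion elements.  Then `P = P_fr ⊕ P_tor`:
every `x ∈ P` factors uniquely as `x = y * z` with `y ∈ P ∩ G_fr` and `z` a
torsion element of `P`. -/
theorem saturated_monoid_splits_free_and_torsion
    {G : Type*} [CommGroup G] (P : Submonoid G) (hfg : P.FG)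
    (hgen : ∀ g : G, ∃ a ∈ P, ∃ b ∈ P, g = a * b⁻¹)
    (hsat : ∀ x : G, (∃ n : ℕ, 0 < n ∧ x ^ n ∈ P) → x ∈ P)
    (Gfr Gtor : Subgroup G)
    (hGtor : ∀ x : G, x ∈ Gtor ↔ ∃ n : ℕ, 0 < n ∧ x ^ n = 1)
    (hGfr : ∀ x ∈ Gfr, (∃ n : ℕ, 0 < n ∧ x ^ n = 1) → x = 1)
    (hdec : ∀ g : G, ∃ y ∈ Gfr, ∃ z ∈ Gtor, g = y * z)
    :
    ∀ x ∈ P, ∃ y z : G,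
      (y ∈ Gfr ∧ y ∈ P) ∧ (z ∈ Gtor ∧ z ∈ P) ∧ x = y * z ∧
      (∀ y' z' : G, y' ∈ Gfr → y' ∈ P → z' ∈ Gtor → z' ∈ P → x = y' * z' →
        y' = y ∧ z' = z) :=
  saturated_monoid_splits_free_and_torsion_general P hsat Gfr Gtor hGtor hGfr hdec
end

section
/- Let α : M → O be a homomorphism of commutative monoids (a pre-log structure, with O the multiplicative monoid of a commutative ring), and let O^× be the unit group. Define M^a = (M ⊕ O^×)/P where P = {(x, α(x)^{-1}) : x ∈ α^{-1}(O^×)}, with α^a(x, u) = u·α(x). Then α^a restricts to an isomorphism (α^a)^{-1}(O^×) ≅ O^×, i.e., M^a is a log structure. -/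
variable {M R : Type*} [CommMonoid M] [CommRing R]

/-- The submonoid `P = {(x, α(x)⁻¹) : x ∈ α⁻¹(O^×)}` of `M ⊕ O^×` used to define the
associated log structure: pairs `(x, u)` with `u·α(x) = 1`. -/
def logP (α : M →* R) : Submonoid (M × Rˣ) where
  carrier := {p : M × Rˣ | (p.2 : R) * α p.1 = 1}
  one_mem' := by simp
  mul_mem' := by
    rintro a b ha hb
    simp only [Set.mem_setOf_eq, Prod.fst_mul, Prod.snd_mul, Units.val_mul,
      map_mul] at *
    rw [mul_mul_mul_comm, ha, hb, one_mul]

/-- The quotient relation by the submonoid `logP α`. -/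
def logRel (α : M →* R) (a b : M × Rˣ) : Prop :=
  ∃ p ∈ logP α, ∃ q ∈ logP α, a * p = b * q

/-- The congruence on `M ⊕ O^×` generated by the quotient relation by `logP α`;
the associated log structure is `M^a = (M ⊕ O^×)/P`, its quotient. -/
def logCon (α : M →* R) : Con (M × Rˣ) := conGen (logRel α)

/-- The map `(x, u) ↦ u·α(x)` as a monoid homomorphism `M ⊕ O^× → O`. -/
def logPreMap (α : M →* R) : M × Rˣ →* R where
  toFun a := (a.2 : R) * α a.1
  map_one' := by simp
  map_mul' a b := by
    simp only [Prod.fst_mul, Prod.snd_mul, Units.val_mul, map_mul]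
    ring

/-- The structural map `α^a : M^a → O`, `α^a(x, u) = u·α(x)`. -/
def logStrMap (α : M →* R) : (logCon α).Quotient →* R :=
  Con.lift _ (logPreMap α) (by
    refine Con.conGen_le.2 ?_
    rintro a b ⟨p, hp, q, hq, hab⟩
    have hp1 : logPreMap α p = 1 := hp
    have hq1 : logPreMap α q = 1 := hq
    have : logPreMap α (a * p) = logPreMap α (b * q) := by rw [hab]
    simpa [map_mul, hp1, hq1] using this)

/-- The associated pre-log-to-log construction `M^a = (M ⊕ O^×)/P` with structural
map `α^a(x, u) = u·α(x)` is a log structure: `α^a` restricts to an isomorphism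
`(α^a)⁻¹(O^×) ≅ O^×`.  Concretely: the map `O^× → M^a`, `u ↦ [(1, u)]`, is
injective, takes values with `α^a[(1,u)] = u`, and every class whose image under
`α^a` is a unit is of this form. -/
theorem associated_log_structure_is_log_structure (α : M →* R) :
    (∀ u : Rˣ, logStrMap α ((logCon α).mk' (1, u)) = (u : R)) ∧
    Function.Injective (fun u : Rˣ => (logCon α).mk' (1, u)) ∧
    (∀ q : (logCon α).Quotient, IsUnit (logStrMap α q) →
      ∃ u : Rˣ, (logCon α).mk' (1, u) = q) := by
  have hval : ∀ a : M × Rˣ, logStrMap α (a : (logCon α).Quotient) = (a.2 : R) * α a.1 :=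
    fun a => rfl
  refine ⟨fun u => by simp [hval], ?_, ?_⟩
  · intro u v h
    have := congrArg (logStrMap α) h
    simp only [show ∀ a : M × Rˣ, logStrMap α ((logCon α).mk' a) = (a.2:R)*α a.1 from fun a => rfl, map_one, mul_one] at this
    exact Units.ext this
  · intro q hq
    induction q using Con.induction_on with
    | H a =>
      obtain ⟨x, w⟩ := a
      rw [show ((⟨x,w⟩ : M × Rˣ) : (logCon α).Quotient) = ((x,w) : M × Rˣ) from rfl, hval] at hq
      have hx : IsUnit (α x) := by
        have : α x = ((w⁻¹ : Rˣ) : R) * ((w : R) * α x) := by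
          rw [← mul_assoc, Units.inv_mul, one_mul]
        rw [this]
        exact (w⁻¹).isUnit.mul hq
      obtain ⟨ux, hux⟩ := hx
      refine ⟨w * ux, ?_⟩
      have hrel : logCon α (1, w * ux) (x, w) := by
        apply ConGen.Rel.of
        refine ⟨(x, ux⁻¹), ?_, (1, 1), ?_, ?_⟩
        · show ((ux⁻¹ : Rˣ) : R) * α x = 1
          rw [← hux, Units.inv_mul]
        · show ((1 : Rˣ) : R) * α 1 = 1
          simp
        · refine Prod.ext ?_ ?_ <;> simp [mul_comm]
      exact (Con.eq _).mpr hrel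
end

section
/- Let h : Q → P be an injective homomorphism of finitely generated integral commutative monoids, K = Ker(Q^gp → P^gp) = 0, and suppose the torsion part of C = Coker(Q^gp → P^gp) has order N. Then for any abelian group extension 0 → I → L → L' → 1 such that N acts invertibly on I, any pair of homomorphisms v : Q^gp → L, w : P^gp → L' with the obvious compatibility lifts to a homomorphism a : P^gp → L extending v along h^gp and lifting w. -/
open scoped DirectSum

private lemma smul_bij_of_dvd {I : Type} [AddCommGroup I] {N d : ℕ}
    (hNinv : Function.Bijective (fun x : I => N • x)) (hd : d ∣ N) :
    Function.Bijective (fun x : I => d • x) := by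
  obtain ⟨m, rfl⟩ := hd
  constructor
  · intro x y hxy
    apply hNinv.1
    simp only [mul_smul] at *
    simp [smul_comm d m, hxy]
  · intro x
    obtain ⟨y, hy⟩ := hNinv.2 x
    refine ⟨m • y, ?_⟩
    simp only [mul_smul] at hy
    simpa [smul_comm d m] using hy

private lemma lift_torsion {C Y I : Type} [AddCommGroup C] [AddCommGroup Y] [AddCommGroup I]
    (ι : I →+ Y) (ρ : Y →+ C) (hρ : Function.Surjective ρ) (hexact : ι.range = ρ.ker)
    {d : ℕ} (hdinv : Function.Bijective (fun x : I => d • x))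
    (c : C) (hc : d • c = 0) : ∃ z : Y, ρ z = c ∧ d • z = 0 := by
  obtain ⟨y, rfl⟩ := hρ c
  have hmem : d • y ∈ ρ.ker := by
    rw [AddMonoidHom.mem_ker, map_nsmul]; exact hc
  rw [← hexact] at hmem
  obtain ⟨i, hi⟩ := hmem
  obtain ⟨j, hj⟩ := hdinv.2 i
  simp only at hj
  have hρι : ρ (ι j) = 0 := by
    have : ι j ∈ ρ.ker := hexact ▸ ⟨j, rfl⟩
    exact this
  refine ⟨y - ι j, by simp [map_sub, hρι], ?_⟩
  rw [smul_sub, ← map_nsmul, hj, hi, sub_self]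

private lemma split_exists {C Y I : Type} [AddCommGroup C] [AddCommGroup Y] [AddCommGroup I]
    [AddGroup.FG C] {N : ℕ}
    (ι : I →+ Y) (ρ : Y →+ C) (hρ : Function.Surjective ρ) (hexact : ι.range = ρ.ker)
    (htor : ∀ c : C, IsOfFinAddOrder c → N • c = 0)
    (hNinv : Function.Bijective (fun x : I => N • x)) :
    ∃ σ : C →+ Y, ∀ c, ρ (σ c) = c := by
  obtain ⟨n, κ, fκ, p, hp, e, ⟨f⟩⟩ := AddCommGroup.equiv_free_prod_directSum_zmod C
  classical
  -- free part
  choose g hg using fun i : Fin n => hρ (f.symm (Finsupp.single i 1, 0))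
  set τf : (Fin n →₀ ℤ) →+ Y := Finsupp.liftAddHom (fun i => zmultiplesHom Y (g i)) with hτf
  -- torsion part
  have hz : ∀ i : κ, ∃ z : Y, ρ z = f.symm (0, DirectSum.of _ i 1) ∧ (p i ^ e i) • z = 0 := by
    intro i
    set q := p i ^ e i with hq
    set c : C := f.symm (0, DirectSum.of _ i 1) with hcdef
    have hqc : q • c = 0 := by
      rw [hcdef, ← map_nsmul, ← map_zero f.symm]
      congr 1
      refine Prod.ext (by simp) ?_
      show q • (DirectSum.of (fun i => ZMod (p i ^ e i)) i 1) = 0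
      rw [← map_nsmul]
      have : q • (1 : ZMod (p i ^ e i)) = 0 := by
        simp [nsmul_eq_mul, ZMod.natCast_self]
      rw [this, map_zero]
    have hq0 : q ≠ 0 := pow_ne_zero _ (hp i).pos.ne'
    have hfin : IsOfFinAddOrder c :=
      isOfFinAddOrder_iff_nsmul_eq_zero.2 ⟨q, Nat.pos_of_ne_zero hq0, hqc⟩
    have hNc : N • c = 0 := htor c hfin
    set d := addOrderOf c with hd
    have hdN : d ∣ N := addOrderOf_dvd_iff_nsmul_eq_zero.2 hNc
    have hdq : d ∣ q := addOrderOf_dvd_iff_nsmul_eq_zero.2 hqc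
    obtain ⟨z, hz1, hz2⟩ := lift_torsion ι ρ hρ hexact (smul_bij_of_dvd hNinv hdN) c
      (addOrderOf_nsmul_eq_zero c)
    obtain ⟨m, hm⟩ := hdq
    exact ⟨z, hz1, by rw [show p i ^ e i = d * m from hq ▸ hm, mul_comm, mul_smul, hz2, smul_zero]⟩
  choose z hz1 hz2 using hz
  have hzint : ∀ i : κ, (zmultiplesHom Y (z i)) ((p i ^ e i : ℕ) : ℤ) = 0 := by
    intro i
    simp only [zmultiplesHom_apply]
    rw [natCast_zsmul]
    exact hz2 i
  set τt : (⨁ i : κ, ZMod (p i ^ e i)) →+ Y :=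
    DirectSum.toAddMonoid (fun i => ZMod.lift (p i ^ e i) ⟨zmultiplesHom Y (z i), hzint i⟩)
    with hτt
  set τ := τf.coprod τt with hτ
  have key : ∀ x, ρ (τ x) = f.symm x := by
    have h1 : ∀ x1, ρ (τf x1) = f.symm (x1, 0) := by
      have : ρ.comp τf =
          ((f.symm : _ ≃+ C) : _ →+ C).comp (AddMonoidHom.inl (Fin n →₀ ℤ) (⨁ i : κ, ZMod (p i ^ e i))) := by
        refine Finsupp.addHom_ext' (fun i => AddMonoidHom.ext_int ?_)
        simp only [AddMonoidHom.comp_apply, Finsupp.singleAddHom_apply, hτf,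
          Finsupp.liftAddHom_apply_single, zmultiplesHom_apply, one_zsmul,
          AddMonoidHom.inl_apply]
        exact hg i
      intro x1
      exact DFunLike.congr_fun this x1
    have h2 : ∀ x2, ρ (τt x2) = f.symm (0, x2) := by
      have : ρ.comp τt =
          ((f.symm : _ ≃+ C) : _ →+ C).comp (AddMonoidHom.inr (Fin n →₀ ℤ) _) := by
        refine DirectSum.addHom_ext (fun i x => ?_)
        obtain ⟨m, rfl⟩ := ZMod.intCast_surjective x
        simp only [AddMonoidHom.comp_apply, hτt, DirectSum.toAddMonoid_of,
          ZMod.lift_coe, zmultiplesHom_apply, AddMonoidHom.inr_apply]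
        have : ((m : ZMod (p i ^ e i))) = m • (1 : ZMod (p i ^ e i)) := (zsmul_one m).symm
        rw [map_zsmul, hz1 i, this, map_zsmul (DirectSum.of (fun i => ZMod (p i ^ e i)) i) m 1]
        have h0 : ((0 : Fin n →₀ ℤ), m • DirectSum.of (fun i => ZMod (p i ^ e i)) i 1)
            = m • ((0 : Fin n →₀ ℤ), DirectSum.of (fun i => ZMod (p i ^ e i)) i 1) := by
          simp
        rw [h0, map_zsmul]
        rfl
      intro x2
      exact DFunLike.congr_fun this x2
    rintro ⟨x1, x2⟩
    rw [hτ, AddMonoidHom.coprod_apply, map_add, h1, h2, ← map_add]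
    congr 1
    simp
  refine ⟨τ.comp (f : C →+ _), fun c => ?_⟩
  simp only [AddMonoidHom.comp_apply]
  rw [key]
  simp

/-- Let `h : Q^gp → P^gp` be an injective homomorphism of the (finitely generated)
Grothendieck groups of finitely generated integral monoids, so `K = Ker h = 0`,
and suppose the torsion part of `C = Coker h` has order `N`.  Then for any abelian
group extension `0 → I → L → L' → 1` with `N` acting invertibly on `I`, any pair
of homomorphisms `v : Q^gp → L` and `w : P^gp → L'` with `π ∘ v = w ∘ h` lifts to
a homomorphism `a : P^gp → L` with `a ∘ h = v` and `π ∘ a = w`. -/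
theorem kato_lifting_lemma
    {Qg Pg L L' I : Type} [AddCommGroup Qg] [AddCommGroup Pg]
    [AddCommGroup L] [AddCommGroup L'] [AddCommGroup I]
    [AddGroup.FG Qg] [AddGroup.FG Pg]
    (h : Qg →+ Pg) (hinj : Function.Injective h)
    (N : ℕ)
    (hN : Nat.card (AddCommGroup.torsion (Pg ⧸ h.range)) = N)
    (ι : I →+ L) (hι : Function.Injective ι)
    (π : L →+ L') (hπ : Function.Surjective π) (hexact : ι.range = π.ker)
    (hNinv : Function.Bijective (fun x : I => N • x))
    (v : Qg →+ L) (w : Pg →+ L') (hcomp : ∀ q : Qg, π (v q) = w (h q)) :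
    ∃ a : Pg →+ L, (∀ q : Qg, a (h q) = v q) ∧ π.comp a = w := by
  classical
  -- the cokernel
  have htor : ∀ c : Pg ⧸ h.range, IsOfFinAddOrder c → N • c = 0 := by
    intro c hc
    have hmem : c ∈ AddCommGroup.torsion (Pg ⧸ h.range) :=
      (AddCommGroup.mem_torsion c).2 hc
    have hdvd := AddSubgroup.addOrderOf_dvd_natCard _ hmem
    rw [hN] at hdvd
    exact addOrderOf_dvd_iff_nsmul_eq_zero.1 hdvd
  -- the fiber product X of L and Pg over L'
  set φ : L × Pg →+ L' :=
    (π.comp (AddMonoidHom.fst L Pg)) - (w.comp (AddMonoidHom.snd L Pg)) with hφ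
  set X := φ.ker with hX
  have hmemX : ∀ x : L × Pg, x ∈ X ↔ π x.1 = w x.2 := by
    intro x
    simp [hX, hφ, AddMonoidHom.mem_ker, sub_eq_zero]
  set s : Qg →+ X := (v.prod h).codRestrict X (fun q => (hmemX _).2 (hcomp q)) with hs
  set mk : X →+ X ⧸ s.range := QuotientAddGroup.mk' s.range with hmk
  have hι0mem : ∀ i : I, ((ι.prod 0) i) ∈ X := by
    intro i
    refine (hmemX _).2 ?_
    have : ι i ∈ π.ker := hexact ▸ ⟨i, rfl⟩
    simpa using this
  set ι0 : I →+ X := (ι.prod 0).codRestrict X hι0mem with hι0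
  set ιY : I →+ X ⧸ s.range := mk.comp ι0 with hιY
  set ρ0 : Pg →+ Pg ⧸ h.range := QuotientAddGroup.mk' h.range with hρ0
  set sndX : X →+ Pg := (AddMonoidHom.snd L Pg).comp X.subtype with hsndX
  have hcond : s.range ≤ (ρ0.comp sndX).ker := by
    rintro _ ⟨q, rfl⟩
    have h1 : sndX (s q) = h q := rfl
    rw [AddMonoidHom.mem_ker, AddMonoidHom.comp_apply, h1, hρ0]
    exact (QuotientAddGroup.eq_zero_iff _).2 ⟨q, rfl⟩
  set ρ : (X ⧸ s.range) →+ Pg ⧸ h.range :=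
    QuotientAddGroup.lift s.range (ρ0.comp sndX) hcond with hρdef
  have hliftmk : ∀ x : X, ρ (mk x) = ρ0 (sndX x) := fun x =>
    QuotientAddGroup.lift_mk' s.range hcond x
  -- surjectivity of ρ
  have hρsurj : Function.Surjective ρ := by
    intro c
    obtain ⟨p, rfl⟩ := QuotientAddGroup.mk'_surjective h.range c
    obtain ⟨l, hl⟩ := hπ (w p)
    refine ⟨mk ⟨(l, p), (hmemX _).2 hl⟩, ?_⟩
    rw [hliftmk]
    rfl
  -- injectivity of ιY
  have hιYinj : Function.Injective ιY := by
    rw [injective_iff_map_eq_zero]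
    intro i hi
    have hi' : ι0 i ∈ s.range := (QuotientAddGroup.eq_zero_iff _).1 hi
    obtain ⟨q, hq⟩ := hi'
    have h2 : h q = 0 := congrArg (fun x : X => (x : L × Pg).2) hq
    have h1 : v q = ι i := congrArg (fun x : X => (x : L × Pg).1) hq
    have hq0 : q = 0 := (injective_iff_map_eq_zero h).1 hinj q h2
    apply (injective_iff_map_eq_zero ι).1 hι
    rw [← h1, hq0, map_zero]
  -- exactness
  have hexactY : ιY.range = ρ.ker := by
    ext y
    constructor
    · rintro ⟨i, rfl⟩
      have : sndX (ι0 i) = 0 := rfl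
      rw [AddMonoidHom.mem_ker, hιY, AddMonoidHom.comp_apply, hliftmk, this, map_zero]
    · intro hy
      obtain ⟨x, rfl⟩ := QuotientAddGroup.mk'_surjective s.range y
      have hx : ρ0 (sndX x) = 0 := by
        rw [← hliftmk]; exact hy
      have hx2 : sndX x ∈ h.range := (QuotientAddGroup.eq_zero_iff _).1 hx
      obtain ⟨q, hq⟩ := hx2
      have hπx : π ((x : L × Pg).1) = w ((x : L × Pg).2) := (hmemX _).1 x.2
      have hker : (x : L × Pg).1 - v q ∈ π.ker := by
        rw [AddMonoidHom.mem_ker, map_sub, hπx, hcomp q, hq,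
          show sndX x = ((x : L × Pg).2) from rfl, sub_self]
      rw [← hexact] at hker
      obtain ⟨i, hi⟩ := hker
      refine ⟨i, ?_⟩
      have hsubeq : ι0 i - x = -(s q) := by
        apply Subtype.ext
        have e1 : ((ι0 i - x : X) : L × Pg) = (ι i, 0) - (x : L × Pg) := rfl
        have e2 : ((-(s q) : X) : L × Pg) = -(v q, h q) := rfl
        rw [e1, e2, hi, Prod.ext_iff]
        constructor
        · show (x : L × Pg).1 - v q - (x : L × Pg).1 = -(v q)
          abel
        · show (0 : Pg) - (x : L × Pg).2 = -(h q)
          have : sndX x = (x : L × Pg).2 := rfl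
          rw [zero_sub, hq, this]
      have hsub : ι0 i - x ∈ s.range := by
        rw [hsubeq]
        exact neg_mem ⟨q, rfl⟩
      show mk (ι0 i) = mk x
      exact (QuotientAddGroup.eq_iff_sub_mem).2 hsub
  -- apply the splitting lemma
  obtain ⟨σ, hσ⟩ := split_exists ιY ρ hρsurj hexactY htor hNinv
  -- assemble the lift
  set e : X →+ (X ⧸ s.range) × Pg := mk.prod sndX with he
  have heinj : Function.Injective e := by
    rw [injective_iff_map_eq_zero]
    intro x hx
    have h1 : mk x = 0 := congrArg Prod.fst hx
    have h2 : sndX x = 0 := congrArg Prod.snd hx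
    have hxr : x ∈ s.range := (QuotientAddGroup.eq_zero_iff _).1 h1
    obtain ⟨q, rfl⟩ := hxr
    have hhq : h q = 0 := h2
    have hq0 : q = 0 := (injective_iff_map_eq_zero h).1 hinj q hhq
    rw [hq0, map_zero]
  set c' : Pg →+ (X ⧸ s.range) × Pg := (σ.comp ρ0).prod (AddMonoidHom.id Pg) with hc'
  have hmem : ∀ p : Pg, c' p ∈ e.range := by
    intro p
    obtain ⟨x0, hx0⟩ := QuotientAddGroup.mk'_surjective s.range (σ (ρ0 p))
    have hρx0 : ρ0 (sndX x0) = ρ0 p := by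
      rw [← hliftmk]
      show ρ (mk x0) = ρ0 p
      rw [show mk x0 = σ (ρ0 p) from hx0, hσ]
    have hsm : p - sndX x0 ∈ h.range := by
      have := (QuotientAddGroup.eq_iff_sub_mem).1 hρx0.symm
      exact this
    obtain ⟨q, hq⟩ := hsm
    refine ⟨x0 + s q, ?_⟩
    have hfst : mk (x0 + s q) = σ (ρ0 p) := by
      rw [map_add, show mk x0 = σ (ρ0 p) from hx0,
        show mk (s q) = 0 from (QuotientAddGroup.eq_zero_iff _).2 ⟨q, rfl⟩, add_zero]
    have hsnd : sndX (x0 + s q) = p := by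
      rw [map_add, show sndX (s q) = h q from rfl, hq]
      abel
    show (mk (x0 + s q), sndX (x0 + s q)) = (σ (ρ0 p), p)
    rw [hfst, hsnd]
  set eqv := AddMonoidHom.ofInjective heinj with heqv
  set t : Pg →+ X := (eqv.symm : e.range ≃+ X).toAddMonoidHom.comp
    (c'.codRestrict e.range hmem) with ht
  have hkey : ∀ p, e (t p) = c' p := by
    intro p
    have h1 : e (t p) = ((eqv (t p)) : (X ⧸ s.range) × Pg) :=
      (AddMonoidHom.ofInjective_apply heinj).symm
    rw [h1, ht]
    show ((eqv (eqv.symm ⟨c' p, hmem p⟩)) : (X ⧸ s.range) × Pg) = c' p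
    rw [AddEquiv.apply_symm_apply]
  refine ⟨(AddMonoidHom.fst L Pg).comp (X.subtype.comp t), ?_, ?_⟩
  · intro q
    have h1 : t (h q) = s q := by
      apply heinj
      rw [hkey]
      show (σ (ρ0 (h q)), h q) = (mk (s q), sndX (s q))
      have hz : ρ0 (h q) = 0 := (QuotientAddGroup.eq_zero_iff _).2 ⟨q, rfl⟩
      have hz2 : mk (s q) = 0 := (QuotientAddGroup.eq_zero_iff _).2 ⟨q, rfl⟩
      rw [hz, hz2, map_zero, show sndX (s q) = h q from rfl]
    show ((t (h q) : L × Pg)).1 = v q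
    rw [h1]
    rfl
  · ext p
    show π ((t p : L × Pg).1) = w p
    have hX1 : π ((t p : L × Pg).1) = w ((t p : L × Pg).2) := (hmemX _).1 (t p).2
    have h2 : ((t p : L × Pg).2) = p := congrArg Prod.snd (hkey p)
    rw [hX1, h2]
end
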